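/- arXiv:2102.01655 — 3 statements merged into one kernel-verified Lean document; each statement's English description precedes it below -/
import Mathlib

section
/- Let q be a prime power and A, B ⊆ F_q^× finite sets. Suppose there exist finite sets Q, R ⊆ F_q and a real number T ≥ 1 so that for each a ∈ A, the number of representations r_{Q+R}(a) = |{(q',r) ∈ Q×R : q' + r = a}| is at least T. Then the multiplicative energy satisfies E^×(A,B) ≤ C·(|A||B|²|Q||R|/(Tq) + q|Q||R||B| log₂(2|A|)/T²) for an absolute constant C, where E^×(A,B) counts quadruples (a1,a2,b1,b2) ∈ A²×B² with a1·b1 = a2·b2. -/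
/-!
Write `E^×(A, B) = ∑ₛ r(s)²`, where `r(s)` counts the pairs `(a, b) ∈ A × B` with `a b = s`, and
sort the `s` into dyadic levels `D = {s | τ ≤ r(s) < 2τ}`; since `0 ∉ A`, `r(s) ≤ |A|`, so there
are `O(log |A|)` levels. On a level, every `s = a b` with `a = q' + r` gives an incidence between
the point `(r, s) ∈ R × D` and the line `y = b x + q' b`, so `T ∑_D r ≤ I(R × D, L)` with
`|L| ≤ |Q||B|`. Vinh's bound `I(P, L) ≤ |P||L|/q + √(q|P||L|)` then forces either
`τ ≲ |Q||R||B|/(qT)` or `τ²|D| ≲ q|Q||R||B|/T²`, and summing over the levels gives the theorem.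
-/

open Finset
open scoped Combinatorics.Additive

section Incidence

variable {F : Type*} [Field F] [DecidableEq F]

/-- `l = (m, c)` encodes the line `y = m x + c`. -/
def OnLine (p l : F × F) : Prop := p.2 = l.1 * p.1 + l.2

instance : DecidableRel (OnLine (F := F)) := fun _ _ => inferInstanceAs (Decidable (_ = _))

lemma card_filter_onLine_product (P L : Finset (F × F)) :
    #{x ∈ P ×ˢ L | OnLine x.1 x.2} = ∑ l ∈ L, #{p ∈ P | OnLine p l} := by
  simp_rw [card_filter, sum_product_right]

variable [Fintype F]

lemma card_filter_onLine (p : F × F) : #{l | OnLine p l} = Fintype.card F := by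
  rw [← card_univ (α := F)]
  refine card_nbij' Prod.fst (fun m => (m, p.2 - m * p.1)) (by simp)
    (fun m _ => mem_filter.mpr ⟨mem_univ _, by unfold OnLine; ring⟩) (fun l hl => ?_)
    (fun m _ => rfl)
  have hl : p.2 = l.1 * p.1 + l.2 := (mem_filter.mp hl).2
  ext <;> simp [hl]

lemma card_filter_onLine_and_onLine_le_one {p p' : F × F} (hp : p ≠ p') :
    #{l | OnLine p l ∧ OnLine p' l} ≤ 1 := by
  refine card_le_one.mpr fun l hl l' hl' => ?_
  obtain ⟨-, hl₁, hl₂⟩ := mem_filter.mp hl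
  obtain ⟨-, hl'₁, hl'₂⟩ := mem_filter.mp hl'
  unfold OnLine at hl₁ hl₂ hl'₁ hl'₂
  have hx : p.1 ≠ p'.1 := fun hx => hp (Prod.ext hx (by rw [hl₁, hl₂, hx]))
  have hslope : l.1 = l'.1 := by
    have h : (l.1 - l'.1) * (p.1 - p'.1) = 0 := by
      linear_combination -hl₁ + hl₂ + hl'₁ - hl'₂
    exact sub_eq_zero.mp ((mul_eq_zero.mp h).resolve_right (sub_ne_zero.mpr hx))
  exact Prod.ext hslope (by linear_combination -hl₁ + hl'₁ - p.1 * hslope)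

lemma sum_card_filter_onLine (P : Finset (F × F)) :
    ∑ l, #{p ∈ P | OnLine p l} = #P * Fintype.card F := by
  calc ∑ l, #{p ∈ P | OnLine p l} = ∑ p ∈ P, #{l | OnLine p l} :=
        (sum_card_bipartiteAbove_eq_sum_card_bipartiteBelow _).symm
    _ = #P * Fintype.card F := sum_const_nat fun p _ => card_filter_onLine p

lemma sum_card_filter_onLine_sq_le (P : Finset (F × F)) :
    ∑ l, #{p ∈ P | OnLine p l} ^ 2 ≤ #P * Fintype.card F + #P ^ 2 := by
  have hpair (x : (F × F) × (F × F)) :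
      #{l | OnLine x.1 l ∧ OnLine x.2 l} ≤ (if x.1 = x.2 then Fintype.card F else 0) + 1 := by
    split_ifs with h
    · simp [h, card_filter_onLine]
    · exact (card_filter_onLine_and_onLine_le_one h).trans (by simp)
  calc ∑ l, #{p ∈ P | OnLine p l} ^ 2
      = ∑ l, #{x ∈ P ×ˢ P | OnLine x.1 l ∧ OnLine x.2 l} := by
        simp_rw [sq, ← card_product, ← filter_product (fun p => OnLine p _)]
    _ = ∑ x ∈ P ×ˢ P, #{l | OnLine x.1 l ∧ OnLine x.2 l} :=
        (sum_card_bipartiteAbove_eq_sum_card_bipartiteBelow _).symm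
    _ ≤ ∑ x ∈ P ×ˢ P, ((if x.1 = x.2 then Fintype.card F else 0) + 1) :=
        sum_le_sum fun x _ => hpair x
    _ = #P * Fintype.card F + #P ^ 2 := by
        rw [sum_add_distrib, ← sum_filter, ← diag_eq_filter]
        simp [sq]

/-- Vinh's point–line incidence bound, via the second moment of the line counts. -/
theorem card_filter_onLine_product_le (P L : Finset (F × F)) :
    (#{x ∈ P ×ˢ L | OnLine x.1 x.2} : ℝ) ≤
      #P * #L / Fintype.card F + √(Fintype.card F * #P * #L) := by
  set q : ℝ := (Fintype.card F : ℝ)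
  have hq : 0 < q := by positivity
  set f : F × F → ℝ := fun l => #{p ∈ P | OnLine p l}
  set μ : ℝ := #P / q
  have hsum : ∑ l, f l = #P * q := by simp only [f, q]; exact_mod_cast sum_card_filter_onLine P
  have hsum_sq : ∑ l, f l ^ 2 ≤ #P * q + #P ^ 2 := by
    simp only [f, q]; exact_mod_cast sum_card_filter_onLine_sq_le P
  have hvar : ∑ l, (f l - μ) ^ 2 ≤ #P * q := by
    have hexp : ∑ l, (f l - μ) ^ 2 = ∑ l, f l ^ 2 - 2 * μ * ∑ l, f l + q ^ 2 * μ ^ 2 := by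
      simp only [sub_sq, sum_add_distrib, sum_sub_distrib, ← sum_mul, ← mul_sum, sum_const,
        card_univ, Fintype.card_prod, nsmul_eq_mul]
      push_cast; ring
    rw [hexp, hsum]
    have : q * μ = #P := mul_div_cancel₀ _ hq.ne'
    linear_combination hsum_sq + (-(2 : ℝ) * #P + q * μ + #P) * this
  have hdev : ∑ l ∈ L, (f l - μ) ≤ √(q * #P * #L) := by
    refine (le_abs_self _).trans (Real.abs_le_sqrt ?_)
    calc (∑ l ∈ L, (f l - μ)) ^ 2 ≤ #L * ∑ l ∈ L, (f l - μ) ^ 2 := sq_sum_le_card_mul_sum_sq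
      _ ≤ #L * (#P * q) := by
        gcongr
        exact (sum_le_univ_sum_of_nonneg fun _ => sq_nonneg _).trans hvar
      _ = q * #P * #L := by ring
  rw [card_filter_onLine_product]
  push_cast
  calc ∑ l ∈ L, f l = ∑ l ∈ L, (f l - μ) + #P * #L / q := by
        rw [sum_sub_distrib, sum_const, nsmul_eq_mul]; ring
    _ ≤ _ := by linarith

end Incidence

lemma mul_card_le_card_filter_product {ι κ γ : Type*} [DecidableEq γ] (s : Finset ι)
    (t : Finset κ) (f : ι → γ) (g : κ → γ) {T : ℝ} (h : ∀ y ∈ t, T ≤ #{x ∈ s | f x = g y}) :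
    T * #t ≤ #{z ∈ s ×ˢ t | f z.1 = g z.2} := by
  simp_rw [card_filter, sum_product_right, ← card_filter]
  push_cast
  rw [mul_comm, ← nsmul_eq_mul, ← sum_const]
  exact sum_le_sum h

lemma sum_sq_le_of_dyadic {ι : Type*} (S : Finset ι) (f : ι → ℕ) {K : ℕ}
    (hK : ∀ s ∈ S, f s ≤ K) (c₁ c₂ : ℝ)
    (h : ∀ j : ℕ, ∀ D ⊆ S, (∀ s ∈ D, 2 ^ j ≤ f s ∧ f s < 2 ^ (j + 1)) →
      ∑ s ∈ D, (f s : ℝ) ^ 2 ≤ c₁ * ∑ s ∈ D, (f s : ℝ) + c₂) :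
    ∑ s ∈ S, (f s : ℝ) ^ 2 ≤ c₁ * ∑ s ∈ S, (f s : ℝ) + (Nat.log 2 K + 1) * c₂ := by
  set D : ℕ → Finset ι := fun j => {s ∈ S | f s ≠ 0 ∧ Nat.log 2 (f s) = j}
  have hlevel (g : ℕ → ℝ) (hg : g 0 = 0) :
      ∑ s ∈ S, g (f s) = ∑ j ∈ range (Nat.log 2 K + 1), ∑ s ∈ D j, g (f s) := by
    rw [← sum_filter_of_ne (p := fun s => f s ≠ 0) fun s _ hs h0 => hs (by rw [h0, hg]),
      ← sum_fiberwise_of_maps_to (g := fun s => Nat.log 2 (f s))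
        (t := range (Nat.log 2 K + 1)) fun s hs => ?_]
    · simp only [D, filter_filter]
    · exact mem_range.mpr (Nat.lt_succ_of_le (Nat.log_mono_right (hK s (mem_filter.mp hs).1)))
  have hD (j : ℕ) : ∀ s ∈ D j, 2 ^ j ≤ f s ∧ f s < 2 ^ (j + 1) := by
    intro s hs
    obtain ⟨-, hs0, rfl⟩ := mem_filter.mp hs
    exact ⟨Nat.pow_log_le_self 2 hs0, Nat.lt_pow_succ_log_self one_lt_two _⟩
  rw [hlevel (fun n => (n : ℝ) ^ 2) (by simp), hlevel (fun n => (n : ℝ)) (by simp), mul_sum]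
  calc ∑ j ∈ range (Nat.log 2 K + 1), ∑ s ∈ D j, (f s : ℝ) ^ 2
      ≤ ∑ j ∈ range (Nat.log 2 K + 1), (c₁ * ∑ s ∈ D j, (f s : ℝ) + c₂) :=
        sum_le_sum fun j _ => h j (D j) (filter_subset _ _) (hD j)
    _ = _ := by simp [sum_add_distrib]

lemma le_of_mul_le_add_sqrt {T q M τ d X S : ℝ} (hT : 0 < T) (hq : 0 < q) (hM : 0 ≤ M)
    (hτ : 0 ≤ τ) (hd : 0 ≤ d) (hX : 0 ≤ X) (hτd : τ * d ≤ X)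
    (hinc : T * X ≤ M * d / q + √(q * M * d)) (hS₁ : S ≤ 2 * τ * X)
    (hS₂ : S ≤ 4 * τ ^ 2 * d) :
    S ≤ 4 * M / (q * T) * X + 16 * q * M / T ^ 2 := by
  have h₁ : 0 ≤ 4 * M / (q * T) * X := by positivity
  have h₂ : 0 ≤ 16 * q * M / T ^ 2 := by positivity
  rcases hd.eq_or_lt with rfl | hd
  · linarith [hS₂.trans_eq (mul_zero _)]
  have hTτd : T * (τ * d) ≤ M * d / q + √(q * M * d) :=
    (mul_le_mul_of_nonneg_left hτd hT.le).trans hinc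
  rcases le_total √(q * M * d) (M * d / q) with h | h
  · have hτM : τ ≤ 2 * M / (q * T) := by
      have : T * (τ * d) * q ≤ 2 * M * d := by
        rw [← le_div_iff₀ hq, mul_assoc, mul_div_assoc]; linarith
      rw [le_div_iff₀ (by positivity)]
      exact le_of_mul_le_mul_right (by linarith) hd
    calc S ≤ 2 * τ * X := hS₁
      _ ≤ 2 * (2 * M / (q * T)) * X := by gcongr
      _ = 4 * M / (q * T) * X := by ring
      _ ≤ _ := by linarith
  · have hsq : (T * (τ * d)) ^ 2 ≤ 4 * (q * M * d) := by
      calc (T * (τ * d)) ^ 2 ≤ (2 * √(q * M * d)) ^ 2 :=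
            pow_le_pow_left₀ (by positivity) (by linarith) 2
        _ = 4 * (q * M * d) := by rw [mul_pow, Real.sq_sqrt (by positivity)]; norm_num
    have hτM : τ ^ 2 * d ≤ 4 * q * M / T ^ 2 := by
      rw [le_div_iff₀ (by positivity)]
      exact le_of_mul_le_mul_right (by linarith) hd
    calc S ≤ 4 * τ ^ 2 * d := hS₂
      _ ≤ 4 * (4 * q * M / T ^ 2) := by linarith
      _ = 16 * q * M / T ^ 2 := by ring
      _ ≤ _ := by linarith

section MulRepr

variable {α : Type*} [DecidableEq α]

def mulRepr [Mul α] (A B : Finset α) (s : α) : ℕ := #{x ∈ A ×ˢ B | x.1 * x.2 = s}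

lemma mulEnergy_eq_sum_mulRepr_sq [Mul α] [Fintype α] (A B : Finset α) :
    Eₘ[A, B] = ∑ s, mulRepr A B s ^ 2 :=
  mulEnergy_eq_sum_sq A B

lemma sum_mulRepr_eq_card_filter [Mul α] (A B D : Finset α) :
    ∑ s ∈ D, mulRepr A B s = #{x ∈ A ×ˢ B | x.1 * x.2 ∈ D} :=
  sum_card_fiberwise_eq_card_filter _ _ _

lemma sum_mulRepr [Mul α] [Fintype α] (A B : Finset α) :
    ∑ s, mulRepr A B s = #A * #B := by
  rw [sum_mulRepr_eq_card_filter, filter_true_of_mem fun _ _ => mem_univ _, card_product]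

lemma mulRepr_le_card_left [MulZeroClass α] [IsLeftCancelMulZero α] {A : Finset α} (hA : 0 ∉ A)
    (B : Finset α) (s : α) : mulRepr A B s ≤ #A := by
  refine card_le_card_of_injOn Prod.fst (fun x hx => (mem_product.mp (mem_filter.mp hx).1).1)
    fun x hx y hy hxy => ?_
  obtain ⟨hx, hxs⟩ := mem_filter.mp hx
  obtain ⟨-, hys⟩ := mem_filter.mp hy
  have hx0 : x.1 ≠ 0 := ne_of_mem_of_not_mem (mem_product.mp hx).1 hA
  exact Prod.ext hxy (mul_left_cancel₀ hx0 (by rw [hxs, hxy, hys]))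

end MulRepr

section EnergyBound

variable {F : Type*} [Field F] [DecidableEq F] {A B Q R : Finset F}

/-- `(q, r, a, b) ↦ ((r, a b), (b, q b))` turns a sum `q + r = a` into the incidence
`a b = b r + q b`. -/
lemma card_filter_add_eq_le_card_filter_onLine (hB : 0 ∉ B) (D : Finset F) :
    #{y ∈ (Q ×ˢ R) ×ˢ {x ∈ A ×ˢ B | x.1 * x.2 ∈ D} | y.1.1 + y.1.2 = y.2.1} ≤
      #{x ∈ (R ×ˢ D) ×ˢ (Q ×ˢ B).image (fun z => (z.2, z.1 * z.2)) | OnLine x.1 x.2} := by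
  refine card_le_card_of_injOn (fun y => ((y.1.2, y.2.1 * y.2.2), (y.2.2, y.1.1 * y.2.2)))
    (fun ⟨⟨q, r⟩, a, b⟩ hy => ?_) fun ⟨⟨q, r⟩, a, b⟩ hy ⟨⟨q', r'⟩, a', b'⟩ hy' h => ?_
  · simp only [coe_filter, mem_filter, mem_product, Set.mem_ofPred_eq] at hy
    obtain ⟨⟨⟨hq, hr⟩, ⟨-, hb⟩, hab⟩, rfl⟩ := hy
    refine mem_filter.mpr ⟨mem_product.mpr ⟨mem_product.mpr ⟨hr, hab⟩,
      mem_image.mpr ⟨(q, b), mem_product.mpr ⟨hq, hb⟩, rfl⟩⟩, ?_⟩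
    simp only [OnLine]; ring
  · simp only [coe_filter, mem_filter, mem_product, Set.mem_ofPred_eq] at hy hy'
    simp only [Prod.mk.injEq] at h
    obtain ⟨⟨-, ⟨-, hb⟩, -⟩, rfl⟩ := hy
    obtain ⟨-, rfl⟩ := hy'
    obtain ⟨⟨rfl, -⟩, rfl, hqb⟩ := h
    obtain rfl := mul_right_cancel₀ (ne_of_mem_of_not_mem hb hB) hqb
    rfl

lemma sum_sq_mulRepr_le_of_dyadic [Fintype F] (hB : 0 ∉ B) {T : ℝ} (hT : 0 < T)
    (hrep : ∀ a ∈ A, T ≤ #{x ∈ Q ×ˢ R | x.1 + x.2 = a}) {D : Finset F} {j : ℕ}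
    (hD : ∀ s ∈ D, 2 ^ j ≤ mulRepr A B s ∧ mulRepr A B s < 2 ^ (j + 1)) :
    ∑ s ∈ D, (mulRepr A B s : ℝ) ^ 2 ≤
      4 * (#Q * #R * #B) / (Fintype.card F * T) * ∑ s ∈ D, (mulRepr A B s : ℝ) +
        16 * Fintype.card F * (#Q * #R * #B) / T ^ 2 := by
  have hτ (s) (hs : s ∈ D) : (2 : ℝ) ^ j ≤ mulRepr A B s := by exact_mod_cast (hD s hs).1
  have h2τ (s) (hs : s ∈ D) : (mulRepr A B s : ℝ) ≤ 2 * 2 ^ j := by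
    rw [← pow_succ']; exact_mod_cast (hD s hs).2.le
  have hinc : T * ∑ s ∈ D, (mulRepr A B s : ℝ) ≤
      #Q * #R * #B * #D / Fintype.card F + √(Fintype.card F * (#Q * #R * #B) * #D) := by
    set L := (Q ×ˢ B).image fun z => (z.2, z.1 * z.2)
    have hL : (#L : ℝ) ≤ #Q * #B := by exact_mod_cast card_image_le.trans_eq (card_product _ _)
    calc T * ∑ s ∈ D, (mulRepr A B s : ℝ)
        ≤ #{y ∈ (Q ×ˢ R) ×ˢ {x ∈ A ×ˢ B | x.1 * x.2 ∈ D} | y.1.1 + y.1.2 = y.2.1} := by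
          rw [← Nat.cast_sum, sum_mulRepr_eq_card_filter]
          exact mul_card_le_card_filter_product _ _ _ Prod.fst
            fun x hx => hrep _ (mem_product.mp (mem_filter.mp hx).1).1
      _ ≤ #{x ∈ (R ×ˢ D) ×ˢ L | OnLine x.1 x.2} := by
          exact_mod_cast card_filter_add_eq_le_card_filter_onLine hB D
      _ ≤ #(R ×ˢ D) * #L / Fintype.card F + √(Fintype.card F * #(R ×ˢ D) * #L) :=
          card_filter_onLine_product_le _ _
      _ ≤ _ := by
          have hPL : (#R * #D * #L : ℝ) ≤ #Q * #R * #B * #D := by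
            calc (#R * #D * #L : ℝ) ≤ #R * #D * (#Q * #B) := by gcongr
              _ = #Q * #R * #B * #D := by ring
          rw [card_product, Nat.cast_mul]
          gcongr ?_ / _ + √?_
          linarith [mul_le_mul_of_nonneg_left hPL (Nat.cast_nonneg (Fintype.card F))]
  refine le_of_mul_le_add_sqrt hT (by positivity) (by positivity) (τ := 2 ^ j) (by positivity)
    (by positivity) (by positivity) ?_ hinc ?_ ?_
  · rw [mul_comm, ← nsmul_eq_mul, ← sum_const]
    exact sum_le_sum hτ
  · rw [mul_sum]
    exact sum_le_sum fun s hs => by rw [sq]; gcongr; exact h2τ s hs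
  · rw [show (4 : ℝ) * (2 ^ j) ^ 2 * #D = #D • (2 * 2 ^ j) ^ 2 by rw [nsmul_eq_mul]; ring,
      ← sum_const]
    exact sum_le_sum fun s hs => by gcongr; exact h2τ s hs

theorem mulEnergy_le_of_le_card_filter_add_eq [Fintype F] (hA : 0 ∉ A) (hB : 0 ∉ B) {T : ℝ}
    (hT : 0 < T) (hrep : ∀ a ∈ A, T ≤ #{x ∈ Q ×ˢ R | x.1 + x.2 = a}) :
    (Eₘ[A, B] : ℝ) ≤ 4 * (#Q * #R * #B) / (Fintype.card F * T) * (#A * #B) +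
      (Nat.log 2 #A + 1) * (16 * Fintype.card F * (#Q * #R * #B) / T ^ 2) := by
  calc (Eₘ[A, B] : ℝ) = ∑ s, (mulRepr A B s : ℝ) ^ 2 := by
        rw [mulEnergy_eq_sum_mulRepr_sq]; push_cast; rfl
    _ ≤ _ := sum_sq_le_of_dyadic univ (mulRepr A B) (fun s _ => mulRepr_le_card_left hA B s)
        _ _ fun _ _ _ hD => sum_sq_mulRepr_le_of_dyadic hB hT hrep hD
    _ = _ := by rw [← Nat.cast_sum, sum_mulRepr, Nat.cast_mul]

end EnergyBound

theorem mult_energy_bound_from_additive_structure :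
    ∃ C : ℝ, 0 < C ∧
      ∀ (F : Type) (_ : Field F) (_ : Fintype F) (_ : DecidableEq F)
        (A B Q R : Finset F) (T : ℝ),
        (0 : F) ∉ A → (0 : F) ∉ B → 1 ≤ T →
        (∀ a ∈ A, T ≤ (((Q ×ˢ R).filter (fun p => p.1 + p.2 = a)).card : ℝ)) →
        ((((A ×ˢ A) ×ˢ (B ×ˢ B)).filter
            (fun x => x.1.1 * x.2.1 = x.1.2 * x.2.2)).card : ℝ) ≤
          C * (A.card * B.card ^ 2 * Q.card * R.card / (T * Fintype.card F) +
            (Fintype.card F) * Q.card * R.card * B.card *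
              Real.logb 2 (2 * A.card) / T ^ 2) := by
  refine ⟨16, by norm_num, fun F _ _ _ A B Q R T hA hB hT hrep => ?_⟩
  obtain rfl | hA₁ := A.eq_empty_or_nonempty
  · simp
  have hlog : (Nat.log 2 #A + 1 : ℝ) ≤ Real.logb 2 (2 * #A) := by
    rw [Real.logb_mul two_ne_zero (by positivity), Real.logb_self_eq_one one_lt_two, add_comm]
    gcongr
    exact_mod_cast Real.natLog_le_logb #A 2
  have hE := mulEnergy_le_of_le_card_filter_add_eq hA hB (by linarith) hrep
  have hlog' := mul_le_mul_of_nonneg_right hlog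
    (by positivity : (0 : ℝ) ≤ 16 * Fintype.card F * (#Q * #R * #B) / T ^ 2)
  have hfirst : (0 : ℝ) ≤ #A * #B ^ 2 * #Q * #R / (T * Fintype.card F) := by positivity
  have hfirst_eq : 4 * (#Q * #R * #B : ℝ) / (Fintype.card F * T) * (#A * #B) =
      4 * (#A * #B ^ 2 * #Q * #R / (T * Fintype.card F)) := by ring
  have hsecond_eq : Real.logb 2 (2 * #A) * (16 * Fintype.card F * (#Q * #R * #B : ℝ) / T ^ 2) =
      16 * (Fintype.card F * #Q * #R * #B * Real.logb 2 (2 * #A) / T ^ 2) := by ring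
  change (Eₘ[A, B] : ℝ) ≤ _
  linarith
end

section
/- Let q be a prime power, ψ : F_q → ℂ the additive character ψ(x) = exp(2πi Tr(x)/p) where p is the characteristic, and X, Y ⊆ F_q finite sets. Then |Σ_{x∈X} Σ_{y∈Y} ψ(xy)|⁴ ≤ q · |X|³ · E(Y), where E(Y) is the additive energy of Y. -/
open Finset

/-- The canonical additive character `ψ(x) = e^{2πi Tr(x)/p}` of a finite
field `F` of characteristic `p`. -/
noncomputable def canonChar (p : ℕ) (F : Type*) [Field F] [Fintype F]
    [Algebra (ZMod p) F] (x : F) : ℂ :=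
  Complex.exp (2 * Real.pi * Complex.I *
    ((Algebra.trace (ZMod p) F x).val : ℂ) / p)

/-!
By Hölder's inequality, `|∑_{x ∈ X} ∑_{y ∈ Y} ψ(xy)|⁴ ≤ |X|³ ∑_{x ∈ X} |∑_{y ∈ Y} ψ(xy)|⁴`, and the
sum over `x ∈ X` may be extended to all of `F`. Expanding the fourth power and using the
orthogonality relation `∑_x ψ(xa) = q·[a = 0]` for a primitive character shows that this complete
fourth moment is exactly `q · E(Y)`. The canonical character is primitive because the trace form
of `F / 𝔽_p` is nondegenerate.
-/

lemma norm_sum_pow_le_card_pow_mul_sum_norm_pow {ι E : Type*} [SeminormedAddCommGroup E]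
    (s : Finset ι) (f : ι → E) (n : ℕ) :
    ‖∑ i ∈ s, f i‖ ^ (n + 1) ≤ (#s : ℝ) ^ n * ∑ i ∈ s, ‖f i‖ ^ (n + 1) :=
  (pow_le_pow_left₀ (norm_nonneg _) (norm_sum_le s f) _).trans
    (pow_sum_le_card_mul_sum_pow (fun i _ => norm_nonneg (f i)) n)

namespace AddChar

section FiniteGroup

variable {G : Type*} [AddCommGroup G] [Finite G]

lemma norm_sum_sq_eq_sum_sub (ψ : AddChar G ℂ) (s : Finset G) :
    (‖∑ a ∈ s, ψ a‖ ^ 2 : ℂ) = ∑ w ∈ s ×ˢ s, ψ (w.1 - w.2) := by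
  rw [← Complex.mul_conj', map_sum, sum_mul_sum, ← sum_product']
  simp only [sub_eq_add_neg, map_add_eq_mul, map_neg_eq_conj]

lemma norm_sum_pow_four_eq_sum (ψ : AddChar G ℂ) (s : Finset G) :
    (‖∑ a ∈ s, ψ a‖ ^ 4 : ℂ) =
      ∑ z ∈ (s ×ˢ s) ×ˢ (s ×ˢ s), ψ (z.1.1 - z.1.2 + (z.2.1 - z.2.2)) := by
  rw [show 4 = 2 * 2 from rfl, pow_mul, norm_sum_sq_eq_sum_sub, sq, sum_mul_sum,
    ← sum_product']
  simp only [map_add_eq_mul]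

end FiniteGroup

section FiniteRing

variable {R : Type*} [CommRing R] [Fintype R] [DecidableEq R] {ψ : AddChar R ℂ}

lemma IsPrimitive.sum_norm_sum_mulShift_pow_four (hψ : ψ.IsPrimitive) (s : Finset R) :
    ∑ x, ‖∑ y ∈ s, ψ (x * y)‖ ^ 4 = Fintype.card R * (s.addEnergy s : ℝ) := by
  have fourth_moment (x : R) : (‖∑ y ∈ s, ψ (x * y)‖ ^ 4 : ℂ) =
      ∑ z ∈ (s ×ˢ s) ×ˢ (s ×ˢ s), ψ (x * (z.1.1 - z.1.2 + (z.2.1 - z.2.2))) :=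
    (ψ.mulShift x).norm_sum_pow_four_eq_sum s
  apply Complex.ofReal_injective
  push_cast
  simp_rw [fourth_moment]
  rw [sum_comm]
  simp_rw [sum_mulShift _ hψ, sub_add_sub_comm, sub_eq_zero]
  rw [← Nat.cast_mul, ← Nat.cast_sum, sum_ite, sum_const_zero, add_zero, sum_const,
    smul_eq_mul, mul_comm, addEnergy]

theorem IsPrimitive.norm_sum_sum_mul_pow_four_le (hψ : ψ.IsPrimitive) (X Y : Finset R) :
    ‖∑ x ∈ X, ∑ y ∈ Y, ψ (x * y)‖ ^ 4 ≤ Fintype.card R * (#X : ℝ) ^ 3 * Y.addEnergy Y :=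
  calc _ ≤ (#X : ℝ) ^ 3 * ∑ x ∈ X, ‖∑ y ∈ Y, ψ (x * y)‖ ^ 4 :=
        norm_sum_pow_le_card_pow_mul_sum_norm_pow X _ 3
    _ ≤ (#X : ℝ) ^ 3 * ∑ x, ‖∑ y ∈ Y, ψ (x * y)‖ ^ 4 := by
        gcongr
        exact subset_univ X
    _ = _ := by rw [hψ.sum_norm_sum_mulShift_pow_four]; ring

end FiniteRing

end AddChar

section CanonicalCharacter

variable (p : ℕ) [Fact p.Prime] (F : Type*)

noncomputable def canonAddChar [CommRing F] [Algebra (ZMod p) F] : AddChar F ℂ :=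
  (AddChar.zmodChar p (Complex.isPrimitiveRoot_exp p (NeZero.ne p)).pow_eq_one)
    |>.compAddMonoidHom (Algebra.trace (ZMod p) F).toAddMonoidHom

lemma canonAddChar_apply [Field F] [Fintype F] [Algebra (ZMod p) F] (x : F) :
    canonAddChar p F x = canonChar p F x := by
  rw [canonAddChar, AddChar.compAddMonoidHom_apply, LinearMap.toAddMonoidHom_coe,
    AddChar.zmodChar_apply, canonChar, ← Complex.exp_nat_mul]
  congr 1
  ring

lemma canonAddChar_isPrimitive [Field F] [Finite F] [Algebra (ZMod p) F] :
    (canonAddChar p F).IsPrimitive := by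
  have : CharP F p := charP_of_injective_ringHom (algebraMap (ZMod p) F).injective p
  obtain rfl : ringChar F = p := ringChar.eq F p
  refine AddChar.IsPrimitive.of_ne_one (AddChar.ne_one_iff.2 ?_)
  obtain ⟨b, hb⟩ := FiniteField.trace_to_zmod_nondegenerate F (one_ne_zero (α := F))
  rw [one_mul] at hb
  exact ⟨b, fun h => hb <| ((AddChar.zmodChar_primitive_of_primitive_root _
    (Complex.isPrimitiveRoot_exp _ (NeZero.ne _))).zmod_char_eq_one_iff _ _).mp h⟩

end CanonicalCharacter

theorem bilinear_char_sum_fourth_power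
    (p : ℕ) (hp : p.Prime) (F : Type*) [Field F] [Fintype F]
    [Algebra (ZMod p) F] [DecidableEq F] (X Y : Finset F) :
    ‖∑ x ∈ X, ∑ y ∈ Y, canonChar p F (x * y)‖ ^ 4 ≤
      (Fintype.card F : ℝ) * (X.card : ℝ) ^ 3 *
        ((((Y ×ˢ Y) ×ˢ (Y ×ˢ Y)).filter
            (fun z => z.1.1 + z.2.1 = z.1.2 + z.2.2)).card : ℝ) := by
  have : Fact p.Prime := ⟨hp⟩
  simp_rw [← canonAddChar_apply]
  exact (canonAddChar_isPrimitive p F).norm_sum_sum_mul_pow_four_le X Y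
end

section
/- (Plünnecke–Ruzsa type inequality) Let A and B be finite nonempty subsets of an abelian group and k, l nonnegative integers. Then |kA − lA| ≤ |A + B|^{k+l} / |B|^{k+l−1}, where kA denotes the k-fold sumset A + ... + A. -/
open Finset Pointwise

/-- The `k`-fold iterated sumset `A + A + ⋯ + A` (`k` times), with
`0`-fold sumset `{0}`. -/
def iterSumset {G : Type*} [AddCommGroup G] [DecidableEq G]
    (A : Finset G) : ℕ → Finset G
  | 0 => {0}
  | n + 1 => iterSumset A n + A

lemma iterSumset_eq_nsmul {G : Type*} [AddCommGroup G] [DecidableEq G]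
    (A : Finset G) : ∀ n : ℕ, iterSumset A n = n • A
  | 0 => by simp [iterSumset, zero_nsmul]; rfl
  | n + 1 => by
      rw [iterSumset, iterSumset_eq_nsmul A n, succ_nsmul]

theorem pluennecke_ruzsa_type
    {G : Type*} [AddCommGroup G] [DecidableEq G]
    (A B : Finset G) (hA : A.Nonempty) (hB : B.Nonempty) (k l : ℕ) :
    ((iterSumset A k - iterSumset A l).card : ℝ) ≤
      ((A + B).card : ℝ) ^ (k + l) / (B.card : ℝ) ^ (k + l - 1) := by
  have key := Finset.pluennecke_ruzsa_inequality_nsmul_sub_nsmul_add hB A k l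
  rw [iterSumset_eq_nsmul, iterSumset_eq_nsmul]
  have hkey : ((k • A - l • A).card : ℝ) ≤
      (((B + A).card : ℝ) / (B.card : ℝ)) ^ (k + l) * (B.card : ℝ) := by
    have := (NNRat.cast_le (K := ℝ)).mpr key
    push_cast at this
    exact_mod_cast this
  have hB0 : (0 : ℝ) < (B.card : ℝ) := by exact_mod_cast hB.card_pos
  rw [add_comm B A] at hkey
  rcases Nat.eq_zero_or_pos (k + l) with h | h
  · obtain ⟨hk, hl⟩ := Nat.add_eq_zero.mp h
    subst hk; subst hl
    simp [zero_nsmul]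
  · calc ((k • A - l • A).card : ℝ)
        ≤ (((A + B).card : ℝ) / (B.card : ℝ)) ^ (k + l) * (B.card : ℝ) := hkey
      _ = ((A + B).card : ℝ) ^ (k + l) / (B.card : ℝ) ^ (k + l - 1) := by
          rw [div_pow]
          have hYe : ((B.card : ℝ)) ^ (k + l) = (B.card : ℝ) ^ (k + l - 1) * (B.card : ℝ) := by
            rw [← pow_succ]; congr 1; omega
          rw [hYe, ← div_div, div_mul_cancel₀ _ hB0.ne']
  done
end
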